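/- With the matrix units E_{jk} = V_jV_k* built from partial isometries in 𝔑₂ as above, and 𝔑₁, 𝔑₂ commuting Schlieder-independent von Neumann algebras, the *-homomorphism α([A_{jk}]) = Σ_{j,k} A_{jk}E_{jk} is isometric on each matrix entry: ‖A_{jk}‖ = ‖E_{jj} α([A]) E_{kk}‖ ≤ ‖α([A])‖ for all [A] ∈ Mₙ(𝔑₁). -/

import Mathlib

/-!
Compressing `α([A])` by `E_jj` and `E_kk` kills every term but `A_jk E_jk`, and `‖A W‖ = ‖A‖`
for `A ∈ 𝔑₁` and a partial isometry `W ∈ 𝔑₂` by the C*-identity, since `(AW)*(AW) = A*A · W*W`.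
Schlieder independence (`a b ≠ 0` for nonzero `a ∈ 𝔑₁`, `b ∈ 𝔑₂`) upgrades to `‖T P‖ = ‖T‖`
for `0 ≤ T ∈ 𝔑₁` and a nonzero projection `P ∈ 𝔑₂` through the spectral cutoff `S = (T - c)₊`,
`c < ‖T‖`: it lies in `𝔑₁` and is nonzero, so `S P ≠ 0`, and `S T ≥ c S` gives
`c ‖S P‖ ≤ ‖S T P‖ ≤ ‖S P‖ ‖T P‖`.
-/

open Matrix

/-- The map `α([A_{jk}]) = Σ_{j,k} A_{jk} E_{jk}` built from partial isometries `V j`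
via the matrix units `E_{jk} = V j (V k)*`. -/
noncomputable def alphaMap {H : Type*} [NormedAddCommGroup H] [InnerProductSpace ℂ H]
    [CompleteSpace H] {n : ℕ} (V : Fin n → (H →L[ℂ] H))
    (M : Matrix (Fin n) (Fin n) (H →L[ℂ] H)) : H →L[ℂ] H :=
  ∑ j, ∑ k, M j k * (V j * star (V k))

section CStarAlgebra

variable {A : Type*} [CStarAlgebra A] [PartialOrder A] [StarOrderedRing A]

theorem cfc_max_sub_ne_zero [Nontrivial A] {T : A} (hT : 0 ≤ T) {c : ℝ} (hc : c < ‖T‖) :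
    cfc (fun t => max (t - c) 0) T ≠ 0 := by
  intro h
  have hzero := eqOn_of_cfc_eq_cfc (h.trans (cfc_zero ℝ T).symm)
  have := hzero (CStarAlgebra.norm_mem_spectrum_of_nonneg hT)
  simp only [Pi.zero_apply, max_eq_right_iff, tsub_le_iff_right, zero_add] at this
  linarith

theorem le_norm_mul_of_cfc_max_sub_mul_ne_zero {T P : A} (hT : IsSelfAdjoint T)
    (hP : IsStarProjection P) (hTP : Commute T P) {c : ℝ}
    (hSP : cfc (fun t => max (t - c) 0) T * P ≠ 0) : c ≤ ‖T * P‖ := by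
  rcases lt_or_ge c 0 with hc | hc
  · exact hc.le.trans (norm_nonneg _)
  set S := cfc (fun t => max (t - c) 0) T
  have hS : 0 ≤ S := cfc_nonneg fun t _ => le_max_right _ _
  have hSP_comm : Commute S P := hTP.cfc_real _
  have hgap : 0 ≤ S * T - c • S := by
    have : S * T - c • S = cfc (fun t => max (t - c) 0 * t - c * max (t - c) 0) T := by
      rw [cfc_sub .., cfc_mul .., cfc_const_mul .., cfc_id' ℝ T]
    rw [this]
    refine cfc_nonneg fun t _ => ?_
    rcases le_total t c with htc | htc
    · simp [max_eq_right (sub_nonpos.2 htc)]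
    · rw [max_eq_left (sub_nonneg.2 htc)]
      nlinarith
  have hle : c • (S * P) ≤ S * T * P := by
    have := Commute.mul_nonneg hgap hP.nonneg
      ((hSP_comm.mul_left hTP).sub_left (hSP_comm.smul_left c))
    rwa [sub_mul, smul_mul_assoc, sub_nonneg] at this
  have hSTP : S * T * P = S * P * (T * P) := by
    rw [mul_assoc S P, ← mul_assoc P, ← hTP.eq, mul_assoc T, hP.isIdempotentElem.eq, mul_assoc]
  have hSP_pos : 0 < ‖S * P‖ := norm_pos_iff.2 hSP
  refine le_of_mul_le_mul_left ?_ hSP_pos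
  calc ‖S * P‖ * c = ‖c • (S * P)‖ := by rw [norm_smul, Real.norm_of_nonneg hc, mul_comm]
    _ ≤ ‖S * T * P‖ := CStarAlgebra.norm_le_norm_of_nonneg_of_le
        (smul_nonneg hc (Commute.mul_nonneg hS hP.nonneg hSP_comm)) hle
    _ ≤ ‖S * P‖ * ‖T * P‖ := hSTP ▸ norm_mul_le _ _

end CStarAlgebra

section CStarRing

variable {E : Type*} [NonUnitalNormedRing E] [StarRing E] [CStarRing E]

theorem mul_star_mul_self_of_isIdempotentElem {W : E} (h : IsIdempotentElem (star W * W)) :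
    W * star W * W = W := by
  have : star (W * star W * W - W) * (W * star W * W - W) =
      star W * W * (star W * W) * (star W * W) - star W * W * (star W * W)
        - (star W * W * (star W * W) - star W * W) := by
    simp only [star_sub, star_mul, star_star]
    noncomm_ring
  rwa [h.eq, h.eq, sub_self, CStarRing.star_mul_self_eq_zero_iff, sub_eq_zero] at this

theorem isStarProjection_mul_star_self_of_isIdempotentElem {W : E}
    (h : IsIdempotentElem (star W * W)) : IsStarProjection (W * star W) where
  isIdempotentElem := by
    rw [IsIdempotentElem, ← mul_assoc, mul_star_mul_self_of_isIdempotentElem h]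
  isSelfAdjoint := .mul_star_self W

theorem IsStarProjection.norm_mul_mul_le {p q : E} (hp : IsStarProjection p)
    (hq : IsStarProjection q) (a : E) : ‖p * a * q‖ ≤ ‖a‖ :=
  calc ‖p * a * q‖ ≤ ‖p‖ * ‖a‖ * ‖q‖ := norm_mul₃_le
    _ ≤ 1 * ‖a‖ * 1 := by gcongr <;> exact IsStarProjection.norm_le _ ‹_›
    _ = ‖a‖ := by ring

end CStarRing

section MatrixUnits

variable {R ι : Type*} [Ring R] [StarRing R] {V : ι → R}
  (hVV : ∀ i, V i * star (V i) * V i = V i)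
  (horth : ∀ i j, i ≠ j → V i * star (V i) * (V j * star (V j)) = 0)
include hVV horth

theorem mul_star_mul_of_ne {i j : ι} (hij : i ≠ j) : V i * star (V i) * V j = 0 := by
  conv_lhs => rw [← hVV j]
  simp only [← mul_assoc]
  rw [mul_assoc (V i * star (V i)), horth i j hij, zero_mul]

theorem mul_star_mul_eq_ite [DecidableEq ι] (i j : ι) :
    V i * star (V i) * V j = if i = j then V j else 0 := by
  split_ifs with hij
  · exact hij ▸ hVV i
  · exact mul_star_mul_of_ne hVV horth hij

theorem star_mul_mul_star_eq_ite [DecidableEq ι] (i j : ι) :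
    star (V j) * (V i * star (V i)) = if i = j then star (V j) else 0 := by
  have := congrArg star (mul_star_mul_eq_ite hVV horth i j)
  simp only [star_mul, star_star, mul_assoc] at this
  rw [this]
  split_ifs <;> simp

theorem mul_star_mul_sum_mul_mul_star_mul [Fintype ι] [DecidableEq ι] (M : Matrix ι ι R)
    {j k : ι} (hM : ∀ p q, Commute (M p q) (V j * star (V j))) :
    V j * star (V j) * (∑ p, ∑ q, M p q * (V p * star (V q))) * (V k * star (V k)) =
      M j k * (V j * star (V k)) := by
  have hterm : ∀ p q, V j * star (V j) * (M p q * (V p * star (V q))) * (V k * star (V k)) =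
      M p q * ((V j * star (V j) * V p) * (star (V q) * (V k * star (V k)))) := by
    intro p q
    rw [← mul_assoc _ (M p q), ← (hM p q).eq]
    simp only [mul_assoc]
  simp only [Finset.mul_sum, Finset.sum_mul, hterm, mul_star_mul_eq_ite hVV horth,
    star_mul_mul_star_eq_ite hVV horth, ite_mul, zero_mul, mul_ite, mul_zero,
    Finset.sum_ite_eq, Finset.mem_univ, if_true]

end MatrixUnits

section Schlieder

variable {H : Type*} [NormedAddCommGroup H] [InnerProductSpace ℂ H] [CompleteSpace H]

theorem VonNeumannAlgebra.cfc_real_mem (N : VonNeumannAlgebra H) {T : H →L[ℂ] H} (hT : T ∈ N)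
    (f : ℝ → ℝ) : cfc f T ∈ N := by
  rw [← SetLike.mem_coe, ← N.centralizer_centralizer]
  exact fun B hB => (Commute.cfc_real (hB T hT) f).eq.symm

variable (N₁ N₂ : VonNeumannAlgebra H) (hcomm : ∀ a ∈ N₁, ∀ b ∈ N₂, a * b = b * a)
  (hSch : ∀ a ∈ N₁, ∀ b ∈ N₂, a ≠ 0 → b ≠ 0 → a * b ≠ 0)
include hcomm hSch

theorem norm_mul_of_nonneg_of_isStarProjection {T P : H →L[ℂ] H} (hT : T ∈ N₁) (hT₀ : 0 ≤ T)
    (hPN : P ∈ N₂) (hP : IsStarProjection P) (hP₀ : P ≠ 0) : ‖T * P‖ = ‖T‖ := by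
  have : Nontrivial (H →L[ℂ] H) := nontrivial_of_ne P 0 hP₀
  refine le_antisymm ((norm_mul_le _ _).trans (mul_le_of_le_one_right (norm_nonneg _)
    (hP.norm_le P))) (le_of_forall_lt_imp_le_of_dense fun c hc => ?_)
  exact le_norm_mul_of_cfc_max_sub_mul_ne_zero hT₀.isSelfAdjoint hP (hcomm T hT P hPN)
    (hSch _ (N₁.cfc_real_mem hT _) P hPN (cfc_max_sub_ne_zero hT₀ hc) hP₀)

theorem norm_mul_of_isIdempotentElem_star_mul_self {A W : H →L[ℂ] H} (hA : A ∈ N₁)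
    (hWN : W ∈ N₂) (hW : IsIdempotentElem (star W * W)) (hW₀ : star W * W ≠ 0) :
    ‖A * W‖ = ‖A‖ := by
  have hstar : star (A * W) * (A * W) = (star A * A) * (star W * W) := by
    calc star (A * W) * (A * W) = star W * (star A * A) * W := by simp only [star_mul, mul_assoc]
      _ = star A * A * (star W * W) := by
        rw [← hcomm _ (mul_mem (star_mem hA) hA) _ (star_mem hWN), mul_assoc]
  have hsq : ‖A * W‖ * ‖A * W‖ = ‖A‖ * ‖A‖ := by
    rw [← CStarRing.norm_star_mul_self, hstar, ← CStarRing.norm_star_mul_self (x := A)]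
    exact norm_mul_of_nonneg_of_isStarProjection N₁ N₂ hcomm hSch (mul_mem (star_mem hA) hA)
      (star_mul_self_nonneg A) (mul_mem (star_mem hWN) hWN) ⟨hW, .star_mul_self W⟩ hW₀
  exact (mul_self_inj_of_nonneg (norm_nonneg _) (norm_nonneg _)).1 hsq

end Schlieder

/-- With matrix units `E_{jk} = V_j V_k*` built from partial isometries in `𝔑₂`, and
`𝔑₁, 𝔑₂` commuting Schlieder-independent von Neumann algebras, the *-homomorphism `α`
is isometric on each matrix entry:
`‖A_{jk}‖ = ‖E_{jj} α([A]) E_{kk}‖ ≤ ‖α([A])‖`. -/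
theorem alphaMap_entry_isometric {H : Type*} [NormedAddCommGroup H]
    [InnerProductSpace ℂ H] [CompleteSpace H]
    (N₁ N₂ : VonNeumannAlgebra H)
    (hcomm : ∀ a ∈ N₁, ∀ b ∈ N₂, a * b = b * a)
    (hSch : ∀ a ∈ N₁, ∀ b ∈ N₂, a ≠ 0 → b ≠ 0 → a * b ≠ 0)
    (n : ℕ) (V : Fin n → (H →L[ℂ] H))
    (hV : ∀ i, V i ∈ N₂)
    (hiso : ∀ i j, star (V i) * V i = star (V j) * V j)
    (hproj : ∀ i, IsIdempotentElem (star (V i) * V i) ∧ IsSelfAdjoint (star (V i) * V i))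
    (hne : ∀ i, star (V i) * V i ≠ 0)
    (horth : ∀ i j, i ≠ j → (V i * star (V i)) * (V j * star (V j)) = 0) :
    ∀ M : Matrix (Fin n) (Fin n) (H →L[ℂ] H), (∀ j k, M j k ∈ N₁) →
      ∀ j k, ‖M j k‖ = ‖(V j * star (V j)) * alphaMap V M * (V k * star (V k))‖ ∧
        ‖M j k‖ ≤ ‖alphaMap V M‖ := by
  intro M hM j k
  have hVV i : V i * star (V i) * V i = V i := mul_star_mul_self_of_isIdempotentElem (hproj i).1
  have hE i : IsStarProjection (V i * star (V i)) :=
    isStarProjection_mul_star_self_of_isIdempotentElem (hproj i).1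
  have hWW : star (V j * star (V k)) * (V j * star (V k)) = V k * star (V k) := by
    rw [star_mul, star_star, mul_assoc, ← mul_assoc (star (V j)), hiso j k, ← mul_assoc,
      ← mul_assoc, hVV]
  have hE₀ : V k * star (V k) ≠ 0 := fun h =>
    hne k (by rw [(CStarRing.mul_star_self_eq_zero_iff _).1 h, star_zero, zero_mul])
  have hentry : ‖M j k‖ = ‖(V j * star (V j)) * alphaMap V M * (V k * star (V k))‖ := by
    rw [alphaMap, mul_star_mul_sum_mul_mul_star_mul hVV horth M
        fun p q => hcomm _ (hM p q) _ (mul_mem (hV j) (star_mem (hV j))),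
      norm_mul_of_isIdempotentElem_star_mul_self N₁ N₂ hcomm hSch (hM j k)
        (mul_mem (hV j) (star_mem (hV k))) (hWW ▸ (hE k).isIdempotentElem) (hWW ▸ hE₀)]
  exact ⟨hentry, hentry ▸ (hE j).norm_mul_mul_le (hE k) _⟩
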